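/- arXiv:2602.20929 — 6 statements merged into one kernel-verified Lean document; each statement's English description precedes it below -/
import Mathlib

section
/- For any n ≥ 1, consider the instance with m = n+1 goods where the conflict graph is the star with center good n+1 and leaves goods 1,…,n, and all agents share the identical additive valuation v with v({i}) = 1 for i = 1,…,n and v({n+1}) = 0. Then every complete EF1 allocation of these goods among n agents has at least |E|/n = 1 violated conflict edge (i.e., some agent receives two adjacent goods). -/
/-- the star instance forces at least one violated edge
in every complete EF1 allocation. -/
theorem stmt_0 (n : ℕ) (hn : 1 ≤ n)
    (v : Fin (n + 1) → ℝ)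
    (hv : ∀ g : Fin (n + 1), v g = if g = Fin.last n then 0 else 1)
    (A : Fin n → Finset (Fin (n + 1)))
    (hdisj : ∀ a b : Fin n, a ≠ b → Disjoint (A a) (A b))
    (hcomp : ∀ g : Fin (n + 1), ∃ a : Fin n, g ∈ A a)
    (hEF1 : ∀ a b : Fin n, a ≠ b → A b = ∅ ∨
      ∃ g ∈ A b, ∑ x ∈ (A b).erase g, v x ≤ ∑ x ∈ A a, v x) :
    ∃ (a : Fin n) (i : Fin (n + 1)), i ≠ Fin.last n ∧
      i ∈ A a ∧ Fin.last n ∈ A a := by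
  obtain ⟨a, ha⟩ := hcomp (Fin.last n)
  by_contra h
  push_neg at h
  have hno : ∀ i : Fin (n + 1), i ≠ Fin.last n → i ∉ A a := by
    intro i hi hmem
    exact h a i hi hmem ha
  -- choose function assigning each good its owner
  choose f hf using hcomp
  set L : Finset (Fin (n + 1)) := Finset.univ.erase (Fin.last n) with hL
  set T : Finset (Fin n) := Finset.univ.erase a with hT
  have hcardL : L.card = n := by
    simp [hL, Finset.card_erase_of_mem]
  have hcardT : T.card = n - 1 := by
    simp [hT, Finset.card_erase_of_mem]
  have hmaps : ∀ g ∈ L, f g ∈ T := by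
    intro g hg
    have hgne : g ≠ Fin.last n := (Finset.mem_erase.mp hg).1
    have : f g ≠ a := by
      intro heq
      exact hno g hgne (heq ▸ hf g)
    simp [hT, this]
  have hlt : T.card < L.card := by
    rw [hcardL, hcardT]
    omega
  obtain ⟨x, hx, y, hy, hxy, hfxy⟩ :=
    Finset.exists_ne_map_eq_of_card_lt_of_maps_to hlt hmaps
  set b := f x with hb
  have hba : b ≠ a := (Finset.mem_erase.mp (hmaps x hx)).1
  have hxb : x ∈ A b := hf x
  have hyb : y ∈ A b := hfxy ▸ hf y
  have hxne : x ≠ Fin.last n := (Finset.mem_erase.mp hx).1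
  have hyne : y ≠ Fin.last n := (Finset.mem_erase.mp hy).1
  -- sum over A a is 0
  have hsumA : ∑ z ∈ A a, v z = 0 := by
    apply Finset.sum_eq_zero
    intro z hz
    by_cases hze : z = Fin.last n
    · simp [hv, hze]
    · exact absurd hz (hno z hze)
  rcases hEF1 a b (Ne.symm hba) with hempty | ⟨g, hg, hsum⟩
  · exact absurd hxb (by simp [hempty])
  · -- one of x, y differs from g and gives value 1 in the erased bundle
    have hnonneg : ∀ z ∈ (A b).erase g, 0 ≤ v z := by
      intro z _
      rw [hv z]
      split <;> norm_num
    have key : (1 : ℝ) ≤ ∑ z ∈ (A b).erase g, v z := by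
      rcases ne_or_eq x g with hxg | hxg
      · have hmem : x ∈ (A b).erase g := Finset.mem_erase.mpr ⟨hxg, hxb⟩
        have := Finset.single_le_sum hnonneg hmem
        rwa [hv x, if_neg hxne] at this
      · have hyg : y ≠ g := by rintro rfl; exact hxy hxg
        have hmem : y ∈ (A b).erase g := Finset.mem_erase.mpr ⟨hyg, hyb⟩
        have := Finset.single_le_sum hnonneg hmem
        rwa [hv y, if_neg hyne] at this
    rw [hsumA] at hsum
    linarith
end

section
/- Let the conflict graph have k connected components, where component i is a complete graph on c_i vertices, with c_1 + ⋯ + c_k = m. Let x_{i,j} be the number of goods agent j receives from component i in a complete allocation. Then Σ_{i=1}^k Σ_{j=1}^n (x_{i,j} − c_i/n)² = 2·(V − |E|/n) + ((n−1)/n)·m, where V = Σ_{i,j} C(x_{i,j},2) is the number of violated edges and |E| = Σ_i C(c_i,2). Consequently, if V ≤ |E|/n, then |x_{i,j} − c_i/n| ≤ √m for all i, j. -/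
/-- the sum-of-squares identity for complete-graph components,
and the resulting balancedness of low-violation allocations. -/
theorem stmt_1 (n k : ℕ) (hn : 1 ≤ n)
    (c : Fin k → ℕ) (x : Fin k → Fin n → ℕ)
    (hx : ∀ i : Fin k, ∑ j : Fin n, x i j = c i)
    (m V E : ℝ)
    (hm : m = ∑ i : Fin k, (c i : ℝ))
    (hV : V = ∑ i : Fin k, ∑ j : Fin n, (x i j : ℝ) * ((x i j : ℝ) - 1) / 2)
    (hE : E = ∑ i : Fin k, (c i : ℝ) * ((c i : ℝ) - 1) / 2) :
    (∑ i : Fin k, ∑ j : Fin n, ((x i j : ℝ) - (c i : ℝ) / n) ^ 2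
        = 2 * (V - E / n) + ((n : ℝ) - 1) / n * m)
    ∧ (V ≤ E / n → ∀ (i : Fin k) (j : Fin n),
        |(x i j : ℝ) - (c i : ℝ) / n| ≤ Real.sqrt m) := by
  have hn0 : (0:ℝ) < n := by exact_mod_cast hn
  have key : ∑ i : Fin k, ∑ j : Fin n, ((x i j : ℝ) - (c i : ℝ) / n) ^ 2
      = 2 * (V - E / n) + ((n : ℝ) - 1) / n * m := by
    subst hm hV hE
    have rhs : 2 * ((∑ i : Fin k, ∑ j : Fin n, (x i j : ℝ) * ((x i j : ℝ) - 1) / 2)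
          - (∑ i : Fin k, (c i : ℝ) * ((c i : ℝ) - 1) / 2) / n)
        + ((n : ℝ) - 1) / n * ∑ i : Fin k, (c i : ℝ)
        = ∑ i : Fin k, (2 * ((∑ j : Fin n, (x i j : ℝ) * ((x i j : ℝ) - 1) / 2)
            - ((c i : ℝ) * ((c i : ℝ) - 1) / 2) / n) + ((n : ℝ) - 1) / n * (c i : ℝ)) := by
      rw [Finset.sum_add_distrib, ← Finset.mul_sum, Finset.sum_sub_distrib, ← Finset.sum_div,
        ← Finset.mul_sum]
      simp [Finset.sum_div]
    rw [rhs]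
    refine Finset.sum_congr rfl (fun i _ => ?_)
    have hc : ∑ j : Fin n, (x i j : ℝ) = (c i : ℝ) := by exact_mod_cast hx i
    have hsq : ∑ j : Fin n, ((x i j : ℝ) - (c i : ℝ) / n) ^ 2
        = (∑ j : Fin n, (x i j : ℝ)^2) - 2 * ((c i : ℝ)/n) * (c i : ℝ)
          + n * ((c i : ℝ)/n)^2 := by
      have : ∀ j : Fin n, ((x i j : ℝ) - (c i : ℝ) / n) ^ 2
          = (x i j : ℝ)^2 - 2 * ((c i : ℝ)/n) * (x i j : ℝ) + ((c i : ℝ)/n)^2 := by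
        intro j; ring
      rw [Finset.sum_congr rfl (fun j _ => this j), Finset.sum_add_distrib,
        Finset.sum_sub_distrib, ← Finset.mul_sum, hc, Finset.sum_const]
      simp [mul_comm]
    have hV2 : ∑ j : Fin n, (x i j : ℝ) * ((x i j : ℝ) - 1) / 2
        = ((∑ j : Fin n, (x i j : ℝ)^2) - (c i : ℝ)) / 2 := by
      rw [← hc, ← Finset.sum_sub_distrib, Finset.sum_div]
      refine Finset.sum_congr rfl (fun j _ => ?_); ring
    rw [hsq, hV2]
    field_simp
    ring
  refine ⟨key, fun hVE i j => ?_⟩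
  have hm0 : 0 ≤ m := by
    rw [hm]; positivity
  have hle : ((x i j : ℝ) - (c i : ℝ) / n) ^ 2
      ≤ ∑ i : Fin k, ∑ j : Fin n, ((x i j : ℝ) - (c i : ℝ) / n) ^ 2 := by
    have h1 : ((x i j : ℝ) - (c i : ℝ) / n) ^ 2
        ≤ ∑ j : Fin n, ((x i j : ℝ) - (c i : ℝ) / n) ^ 2 :=
      Finset.single_le_sum (f := fun j' : Fin n => ((x i j' : ℝ) - (c i : ℝ) / n) ^ 2)
        (fun _ _ => sq_nonneg _) (Finset.mem_univ j)
    exact h1.trans (Finset.single_le_sum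
      (f := fun i' : Fin k => ∑ j : Fin n, ((x i' j : ℝ) - (c i' : ℝ) / n) ^ 2)
      (fun _ _ => Finset.sum_nonneg fun _ _ => sq_nonneg _) (Finset.mem_univ i))
  have htot : ∑ i : Fin k, ∑ j : Fin n, ((x i j : ℝ) - (c i : ℝ) / n) ^ 2 ≤ m := by
    rw [key]
    have h1 : 2 * (V - E / n) ≤ 0 := by linarith
    have h2 : ((n : ℝ) - 1) / n * m ≤ 1 * m := by
      apply mul_le_mul_of_nonneg_right _ hm0
      rw [div_le_one hn0]; linarith
    linarith
  rw [← Real.sqrt_sq_eq_abs]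
  exact Real.sqrt_le_sqrt (hle.trans htot)
end

section
/- Let A_1,…,A_n and B = {b_1,…,b_n} be disjoint sets of already-allocated goods and a block of n new goods. For s ∈ {1,…,n}, let σ_s be the cyclic shift assigning good b_{((s+t−2) mod n)+1} to agent t. Each conflict edge between a previously allocated good and a good in B becomes violated under exactly one of the n cyclic shifts, and no edge inside B is violated under any shift. Consequently, there exists s such that the increase in the number of violated edges under σ_s is at most |E(A_1 ∪ ⋯ ∪ A_n, B)| / n. -/
open scoped Classical

/-- Number of violated conflict edges of an allocation: edges both of
whose endpoints lie in the same bundle. -/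
noncomputable def violations {γ : Type*} [Fintype γ] {n : ℕ}
    (G : SimpleGraph γ) (B : Fin n → Finset γ) : ℕ :=
  (G.edgeFinset.filter (fun e => ∃ a : Fin n, ∀ x ∈ e, x ∈ B a)).card

/-- Number of conflict edges with one endpoint in `X` and the other in `Y`. -/
noncomputable def edgesBetween {γ : Type*} [Fintype γ]
    (G : SimpleGraph γ) (X Y : Finset γ) : ℕ :=
  (G.edgeFinset.filter (fun e => ∃ x ∈ X, ∃ y ∈ Y, e = s(x, y))).card

/-- Cardinalities of filters agree regardless of the decidability instance. -/
lemma card_filter_irrel {α : Type*} (s : Finset α) (p : α → Prop)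
    (h h' : DecidablePred p) :
    (@Finset.filter α p h s).card = (@Finset.filter α p h' s).card := by
  have : h = h' := Subsingleton.elim h h'
  subst this
  rfl

/-- each cross edge is violated under exactly one cyclic shift,
no edge inside the new block is violated, and hence some cyclic shift
increases the number of violated edges by at most the number of cross
edges divided by `n`. -/
theorem stmt_3 {γ : Type*} [Fintype γ] [DecidableEq γ] (n : ℕ) (hn : 0 < n)
    (G : SimpleGraph γ)
    (A : Fin n → Finset γ) (b : Fin n → γ)
    (hdisj : ∀ a a' : Fin n, a ≠ a' → Disjoint (A a) (A a'))
    (hbinj : Function.Injective b)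
    (hnew : ∀ (t : Fin n) (a : Fin n), b t ∉ A a) :
    (∀ (x : γ) (t : Fin n), G.Adj x (b t) → (∃ a : Fin n, x ∈ A a) →
      ∃! s : Fin n, ∃ a : Fin n, x ∈ A a ∧ b (s + a) = b t)
    ∧ (∀ (s : Fin n) (t t' : Fin n), t ≠ t' →
        ¬ ∃ a : Fin n, b t ∈ A a ∪ {b (s + a)} ∧ b t' ∈ A a ∪ {b (s + a)})
    ∧ ∃ s : Fin n,
        (violations G (fun t => A t ∪ {b (s + t)}) : ℝ) ≤
          (violations G A : ℝ) +
            (edgesBetween G (Finset.univ.biUnion A) (Finset.univ.image b) : ℝ) / n := by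
  haveI : NeZero n := ⟨hn.ne'⟩
  -- uniqueness of the bundle containing a given allocated good
  have huniq : ∀ {x : γ} {a a' : Fin n}, x ∈ A a → x ∈ A a' → a = a' := by
    intro x a a' hx hx'
    by_contra h
    have := (hdisj a a' h).le_bot (Finset.mem_inter.mpr ⟨hx, hx'⟩)
    simp at this
  refine ⟨?_, ?_, ?_⟩
  · -- Part 1
    rintro x t _ ⟨a, hx⟩
    refine ⟨t - a, ⟨a, hx, by rw [sub_add_cancel]⟩, ?_⟩
    rintro s ⟨a', hx', hbe⟩
    have ha : a' = a := huniq hx' hx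
    subst ha
    have : s + a' = t := hbinj hbe
    exact eq_sub_of_add_eq this
  · -- Part 2
    rintro s t t' htt ⟨a, ht, ht'⟩
    simp only [Finset.mem_union, Finset.mem_singleton] at ht ht'
    rcases ht with h | h
    · exact hnew t a h
    rcases ht' with h' | h'
    · exact hnew t' a h'
    exact htt (hbinj (h.trans h'.symm))
  · -- Part 3
    set C : Finset (Sym2 γ) :=
      G.edgeFinset.filter
        (fun e => ∃ x ∈ Finset.univ.biUnion A, ∃ y ∈ Finset.univ.image b, e = s(x, y)) with hC
    set cross : Fin n → Finset (Sym2 γ) := fun s =>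
      G.edgeFinset.filter (fun e => ∃ a : Fin n, ∃ x ∈ A a, e = s(x, b (s + a))) with hcross
    -- bridging the Classical instances in the definitions with the ambient ones
    have eqA : violations G A =
        (G.edgeFinset.filter (fun e => ∃ a : Fin n, ∀ x ∈ e, x ∈ A a)).card := by
      unfold violations
      exact card_filter_irrel _ _ _ _
    have eqS : ∀ s : Fin n, violations G (fun t => A t ∪ {b (s + t)}) =
        (G.edgeFinset.filter
          (fun e => ∃ a : Fin n, ∀ x ∈ e, x ∈ A a ∪ {b (s + a)})).card := by
      intro s
      unfold violations
      exact card_filter_irrel _ _ _ _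
    have eqC : edgesBetween G (Finset.univ.biUnion A) (Finset.univ.image b) = C.card := by
      rw [hC]
      unfold edgesBetween
      exact card_filter_irrel _ _ _ _
    -- each shift's violations bounded by old violations plus its cross edges
    have hbound : ∀ s : Fin n,
        violations G (fun t => A t ∪ {b (s + t)}) ≤ violations G A + (cross s).card := by
      intro s
      rw [eqS s, eqA]
      refine le_trans (Finset.card_le_card (t := (G.edgeFinset.filter
          (fun e => ∃ a : Fin n, ∀ x ∈ e, x ∈ A a)) ∪ cross s) ?_)
        (Finset.card_union_le _ _)
      intro e he
      simp only [Finset.mem_filter] at he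
      obtain ⟨heE, a, hall⟩ := he
      induction e with
      | _ x y =>
        have hxy : x ≠ y := by
          have := (SimpleGraph.mem_edgeFinset.mp heE)
          rw [SimpleGraph.mem_edgeSet] at this
          exact this.ne
        have hx := hall x (by simp)
        have hy := hall y (by simp)
        simp only [Finset.mem_union, Finset.mem_singleton] at hx hy
        rcases hx with hx | hx <;> rcases hy with hy | hy
        · exact Finset.mem_union_left _ (Finset.mem_filter.mpr ⟨heE, a, by
            intro z hz
            rcases Sym2.mem_iff.mp hz with rfl | rfl <;> assumption⟩)
        · exact Finset.mem_union_right _ (Finset.mem_filter.mpr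
            ⟨heE, a, x, hx, by rw [hy]⟩)
        · exact Finset.mem_union_right _ (Finset.mem_filter.mpr
            ⟨heE, a, y, hy, by rw [hx, Sym2.eq_swap]⟩)
        · exact absurd (hx.trans hy.symm) hxy
    -- cross sets are pairwise disjoint
    have hdisjcross : ∀ s s' : Fin n, s ≠ s' → Disjoint (cross s) (cross s') := by
      intro s s' hss
      rw [Finset.disjoint_left]
      intro e he he'
      simp only [hcross, Finset.mem_filter] at he he'
      obtain ⟨_, a, x, hx, rfl⟩ := he
      obtain ⟨_, a', x', hx', heq⟩ := he'
      rw [Sym2.eq_iff] at heq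
      rcases heq with ⟨rfl, hb⟩ | ⟨h1, h2⟩
      · have : a = a' := huniq hx hx'
        subst this
        exact hss (add_right_cancel (hbinj hb))
      · exact hnew _ _ (h1 ▸ hx)
    -- union of cross sets is contained in the cross-edge set
    have hsubC : ∀ s : Fin n, cross s ⊆ C := by
      intro s e he
      simp only [hcross, Finset.mem_filter] at he
      obtain ⟨heE, a, x, hx, rfl⟩ := he
      rw [hC]
      simp only [Finset.mem_filter]
      exact ⟨heE, x, Finset.mem_biUnion.mpr ⟨a, Finset.mem_univ _, hx⟩,
        b (s + a), Finset.mem_image.mpr ⟨s + a, Finset.mem_univ _, rfl⟩, rfl⟩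
    have hsumcross : ∑ s : Fin n, (cross s).card ≤ C.card := by
      rw [← Finset.card_biUnion (fun s _ t _ hst => hdisjcross s t hst)]
      apply Finset.card_le_card
      intro e he
      obtain ⟨s, _, hes⟩ := Finset.mem_biUnion.mp he
      exact hsubC s hes
    -- pigeonhole
    by_contra hcon
    push_neg at hcon
    have hsumlt : ∑ s : Fin n, ((violations G A : ℝ) + (C.card : ℝ) / n) <
        ∑ s : Fin n, (violations G (fun t => A t ∪ {b (s + t)}) : ℝ) := by
      apply Finset.sum_lt_sum_of_nonempty ⟨0, Finset.mem_univ _⟩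
      intro s _
      have := hcon s
      rw [eqC] at this
      exact this
    have hrhs : ∑ s : Fin n, (violations G (fun t => A t ∪ {b (s + t)}) : ℝ) ≤
        n * (violations G A : ℝ) + (C.card : ℝ) := by
      have h1 : ∑ s : Fin n, (violations G (fun t => A t ∪ {b (s + t)})) ≤
          ∑ s : Fin n, (violations G A + (cross s).card) :=
        Finset.sum_le_sum (fun s _ => hbound s)
      have h2 : ∑ s : Fin n, (violations G A + (cross s).card) ≤
          n * violations G A + C.card := by
        rw [Finset.sum_add_distrib, Finset.sum_const, Finset.card_univ, Fintype.card_fin,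
          smul_eq_mul]
        exact Nat.add_le_add_left hsumcross _
      calc ∑ s : Fin n, (violations G (fun t => A t ∪ {b (s + t)}) : ℝ)
          = ((∑ s : Fin n, violations G (fun t => A t ∪ {b (s + t)}) : ℕ) : ℝ) := by
            push_cast; ring
        _ ≤ ((n * violations G A + C.card : ℕ) : ℝ) := by
            exact_mod_cast h1.trans h2
        _ = n * (violations G A : ℝ) + (C.card : ℝ) := by push_cast; ring
    have hlhs : ∑ s : Fin n, ((violations G A : ℝ) + (C.card : ℝ) / n) =
        n * (violations G A : ℝ) + (C.card : ℝ) := by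
      rw [Finset.sum_const, Finset.card_univ, Fintype.card_fin, nsmul_eq_mul, mul_add,
        mul_div_cancel₀]
      exact Nat.cast_ne_zero.mpr hn.ne'
    linarith
end

section
/- Let Z be an n × n real matrix such that in every column the difference between the maximum and minimum entry is at most λ ≥ 0. Then for every permutation σ of {1,…,n}, f_Z(σ) = Σ_i z_{i,σ(i)} ≤ (1/n) Σ_{i,j} z_{i,j} + nλ. -/
/-- if every column of `Z` varies by at most `λ`, then every
permutation sum is at most the average `(1/n) Σ_{i,j} z_{i,j}` plus `n λ`. -/
theorem stmt_9 (n : ℕ) (hn : 0 < n) (Z : Fin n → Fin n → ℝ)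
    (lam : ℝ) (hlam : 0 ≤ lam)
    (hcol : ∀ (j : Fin n) (i i' : Fin n), Z i j - Z i' j ≤ lam) :
    ∀ σ : Equiv.Perm (Fin n),
      ∑ i, Z i (σ i) ≤ (∑ i, ∑ j, Z i j) / n + n * lam := by
  intro σ
  have hn' : (0:ℝ) < n := by exact_mod_cast hn
  have key : ∀ i : Fin n, Z i (σ i) ≤ (∑ i', Z i' (σ i)) / n + lam := by
    intro i
    rw [div_add' _ _ _ (ne_of_gt hn'), le_div_iff₀ hn', mul_comm]
    have : (n : ℝ) * Z i (σ i) = ∑ _i' : Fin n, Z i (σ i) := by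
      simp [Finset.sum_const, mul_comm]
    rw [this]
    have : (∑ i', Z i' (σ i)) + lam * n = ∑ i' : Fin n, (Z i' (σ i) + lam) := by
      simp [Finset.sum_add_distrib, Finset.sum_const, mul_comm]
    rw [this]
    exact Finset.sum_le_sum fun i' _ => by linarith [hcol (σ i) i i']
  calc ∑ i, Z i (σ i) ≤ ∑ i, ((∑ i', Z i' (σ i)) / n + lam) :=
        Finset.sum_le_sum fun i _ => key i
    _ = (∑ i, ∑ i', Z i' (σ i)) / n + n * lam := by
        rw [Finset.sum_add_distrib, ← Finset.sum_div]
        simp [Finset.sum_const, mul_comm]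
    _ = (∑ i, ∑ j, Z i j) / n + n * lam := by
        rw [Finset.sum_comm]
        congr 1
        rw [Finset.sum_congr rfl fun i' _ => (Equiv.sum_comp σ (fun j => Z i' j))]
end

section
/- Let (A_1,…,A_n) be the current partial allocation and let g_1,…,g_n be n unassigned goods with profile vectors p_{g_i} = (d_{A_2}(g_i) − d_{A_1}(g_i), …, d_{A_n}(g_i) − d_{A_1}(g_i)) ∈ ℤ^{n−1}. Suppose that in each coordinate the profile vectors differ by at most λ: max_i (p_{g_i})_j − min_i (p_{g_i})_j ≤ λ for all j. Then for every bijection σ assigning the goods g_1,…,g_n one-to-one to the bundles A_1,…,A_n, the total increase in violated edges, Σ_{i=1}^n d_{A_{σ(i)}}(g_i), is at most |E(A_1 ∪ ⋯ ∪ A_n, {g_1,…,g_n})|/n + nλ. -/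
open scoped Classical

/-!
Write `z i a = d_{A_a}(g_i)`. The profile hypothesis says that `w i a = z i a - z i 0` varies
by at most `λ` in `i` for each fixed `a`, so `n · w i (σ i)` is at most the column sum
`∑_{i'} w i' (σ i) + n λ`. Summing over `i`, the columns are permuted by `σ`, hence
`n ∑_i z i (σ i) ≤ ∑_{i,a} z i a + n² λ`. Finally `∑_{i,a} z i a` counts each edge between
`⋃ A_a` and `{g_i}` at most once, because the bundles are disjoint.
-/

open Finset

theorem card_mul_le_sum_add_card_mul {ι : Type*} [Fintype ι] (f : ι → ℝ) (lam : ℝ)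
    (h : ∀ i i', f i ≤ f i' + lam) (i : ι) :
    Fintype.card ι * f i ≤ ∑ i', f i' + Fintype.card ι * lam := by
  calc (Fintype.card ι : ℝ) * f i = ∑ _i' : ι, f i := by simp
    _ ≤ ∑ i', (f i' + lam) := sum_le_sum fun i' _ => h i i'
    _ = ∑ i', f i' + Fintype.card ι * lam := by simp [sum_add_distrib]

theorem sum_perm_le_of_profile_spread {ι : Type*} [Fintype ι] (z : ι → ι → ℝ) (a₀ : ι)
    (lam : ℝ) (h : ∀ a i i', (z i a - z i a₀) - (z i' a - z i' a₀) ≤ lam)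
    (σ : Equiv.Perm ι) :
    ∑ i, z i (σ i) ≤ (∑ i, ∑ a, z i a) / Fintype.card ι + Fintype.card ι * lam := by
  set n : ℝ := (Fintype.card ι : ℝ)
  set w : ι → ι → ℝ := fun i a => z i a - z i a₀
  have hcol : ∀ i, n * w i (σ i) ≤ ∑ i', w i' (σ i) + n * lam := fun i =>
    card_mul_le_sum_add_card_mul (fun i' => w i' (σ i)) lam
      (fun j j' => sub_le_iff_le_add'.mp (h (σ i) j j')) i
  have hrows : ∑ i, ∑ i', w i' (σ i) = ∑ i, ∑ a, z i a - n * ∑ i, z i a₀ := by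
    rw [Equiv.sum_comp σ (fun a => ∑ i', w i' a), sum_comm]
    simp [w, sum_sub_distrib, n, mul_sum]
  have hdiag : ∑ i, n * w i (σ i) = n * ∑ i, z i (σ i) - n * ∑ i, z i a₀ := by
    simp [w, ← mul_sum, sum_sub_distrib, mul_sub]
  have hmul : n * ∑ i, z i (σ i) ≤ ∑ i, ∑ a, z i a + n * (n * lam) := by
    have := sum_le_sum fun i (_ : i ∈ univ) => hcol i
    rw [hdiag, sum_add_distrib, hrows] at this
    simp only [sum_const, card_univ, nsmul_eq_mul] at this
    linarith
  have hn : 0 < n := Nat.cast_pos.mpr (Fintype.card_pos_iff.mpr ⟨a₀⟩)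
  rw [div_add' _ _ _ hn.ne', le_div_iff₀ hn]
  linarith

theorem sum_card_filter_adj_le_edgesBetween {γ : Type*} [Fintype γ] [DecidableEq γ]
    (G : SimpleGraph γ) [DecidableRel G.Adj] (X Y : Finset γ) (hXY : Disjoint X Y) :
    ∑ y ∈ Y, #(X.filter (G.Adj y)) ≤ edgesBetween G X Y := by
  rw [← card_sigma]
  refine card_le_card_of_injOn (fun p => s(p.2, p.1)) ?_ ?_
  · rintro ⟨y, x⟩ hyx
    simp only [coe_sigma, Set.mem_sigma_iff, mem_coe, mem_filter] at hyx
    simp only [mem_coe, mem_filter, SimpleGraph.mem_edgeFinset, SimpleGraph.mem_edgeSet]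
    exact ⟨hyx.2.2.symm, x, hyx.2.1, y, hyx.1, rfl⟩
  · rintro ⟨y, x⟩ hyx ⟨y', x'⟩ hyx' heq
    simp only [coe_sigma, Set.mem_sigma_iff, mem_coe, mem_filter] at hyx hyx'
    rcases Sym2.eq_iff.mp heq with ⟨rfl, rfl⟩ | ⟨rfl, -⟩
    · rfl
    · exact absurd hyx'.1 (disjoint_left.mp hXY hyx.2.1)

theorem sum_sum_card_filter_adj_le_edgesBetween {ι γ : Type*} [Fintype ι] [Fintype γ]
    [DecidableEq γ] (G : SimpleGraph γ) [DecidableRel G.Adj] (A : ι → Finset γ) (g : ι → γ)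
    (hdisj : Pairwise fun a a' => Disjoint (A a) (A a')) (hg : Function.Injective g)
    (hnew : ∀ i a, g i ∉ A a) :
    ∑ i, ∑ a, #((A a).filter (G.Adj (g i))) ≤ edgesBetween G (univ.biUnion A) (univ.image g) := by
  have hbundles : ∀ i, ∑ a, #((A a).filter (G.Adj (g i)))
      = #((univ.biUnion A).filter (G.Adj (g i))) := fun i => by
    rw [filter_biUnion, card_biUnion fun a _ a' _ h =>
      (hdisj h).mono (filter_subset _ _) (filter_subset _ _)]
  have hUg : Disjoint (univ.biUnion A) (univ.image g) := by
    simp only [disjoint_left, mem_biUnion, mem_image, mem_univ, true_and]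
    rintro x ⟨a, hx⟩ ⟨i, rfl⟩
    exact hnew i a hx
  have := sum_card_filter_adj_le_edgesBetween G _ _ hUg
  rwa [sum_image fun i _ j _ h => hg h, ← sum_congr rfl fun i _ => hbundles i] at this

theorem stmt_16_general {γ : Type*} [Fintype γ] [DecidableEq γ] (n : ℕ) (hn : 0 < n)
    (G : SimpleGraph γ) [DecidableRel G.Adj]
    (A : Fin n → Finset γ) (g : Fin n → γ)
    (hdisj : ∀ a a' : Fin n, a ≠ a' → Disjoint (A a) (A a'))
    (hginj : Function.Injective g)
    (hnew : ∀ (i : Fin n) (a : Fin n), g i ∉ A a)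
    (lam : ℝ)
    (hprof : ∀ (a : Fin n) (i i' : Fin n),
      ((((A a).filter (G.Adj (g i))).card : ℝ)
          - ((A ⟨0, hn⟩).filter (G.Adj (g i))).card)
        - ((((A a).filter (G.Adj (g i'))).card : ℝ)
          - ((A ⟨0, hn⟩).filter (G.Adj (g i'))).card) ≤ lam) :
    ∀ σ : Equiv.Perm (Fin n),
      (∑ i : Fin n, (((A (σ i)).filter (G.Adj (g i))).card : ℝ))
        ≤ (edgesBetween G (Finset.univ.biUnion A) (Finset.univ.image g) : ℝ) / n
          + n * lam := by
  intro σ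
  have hedges : (∑ i, ∑ a, (#((A a).filter (G.Adj (g i))) : ℝ))
      ≤ edgesBetween G (univ.biUnion A) (univ.image g) := by
    exact_mod_cast sum_sum_card_filter_adj_le_edgesBetween G A g hdisj hginj hnew
  have hperm := sum_perm_le_of_profile_spread (fun i a => (#((A a).filter (G.Adj (g i))) : ℝ))
    ⟨0, hn⟩ lam hprof σ
  rw [Fintype.card_fin] at hperm
  exact hperm.trans (by gcongr)

/-- matching lemma: if the profile vectors of the `n` chosen
goods differ coordinatewise by at most `λ`, then for every assignment of the
goods to the bundles, the violation increase `Σ_i d_{A_{σ(i)}}(g_i)` is at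
most `|E(A_1 ∪ ⋯ ∪ A_n, {g_1, …, g_n})| / n + n λ`. -/
theorem stmt_16 {γ : Type*} [Fintype γ] [DecidableEq γ] (n : ℕ) (hn : 0 < n)
    (G : SimpleGraph γ) [DecidableRel G.Adj]
    (A : Fin n → Finset γ) (g : Fin n → γ)
    (hdisj : ∀ a a' : Fin n, a ≠ a' → Disjoint (A a) (A a'))
    (hginj : Function.Injective g)
    (hnew : ∀ (i : Fin n) (a : Fin n), g i ∉ A a)
    (lam : ℝ) (hlam : 0 ≤ lam)
    (hprof : ∀ (a : Fin n) (i i' : Fin n),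
      ((((A a).filter (G.Adj (g i))).card : ℝ)
          - ((A ⟨0, hn⟩).filter (G.Adj (g i))).card)
        - ((((A a).filter (G.Adj (g i'))).card : ℝ)
          - ((A ⟨0, hn⟩).filter (G.Adj (g i'))).card) ≤ lam) :
    ∀ σ : Equiv.Perm (Fin n),
      (∑ i : Fin n, (((A (σ i)).filter (G.Adj (g i))).card : ℝ))
        ≤ (edgesBetween G (Finset.univ.biUnion A) (Finset.univ.image g) : ℝ) / n
          + n * lam :=
  stmt_16_general n hn G A g hdisj hginj hnew lam hprof
end

section
/- Let v_1,…,v_n be additive valuations and let (A_1,…,A_n) be an EF1 allocation. Then there exists a permutation σ of {1,…,n} such that (A_{σ(1)},…,A_{σ(n)}) is EF1 and its envy graph — the directed graph on agents with an edge from i to j whenever v_i(A_{σ(i)}) < v_i(A_{σ(j)}) — is acyclic. -/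
/-!
Among the bundle permutations that leave every agent weakly better off, pick one of maximal
welfare `∑ i, v i (A (σ i))`. Since valuations are monotone, an agent who weakly prefers its new
bundle to its old one still envies every other bundle up to one good, so EF1 survives. An envy
cycle would be a permutation of the agents along which every agent on it strictly gains by taking
its successor's bundle; rotating the bundles along it raises the welfare, contradicting maximality.
-/

open Function Relation Equiv

namespace Function

variable {α : Type*}

theorem exists_iterate_mem_periodicPts [Finite α] (f : α → α) (x : α) :
    ∃ m, f^[m] x ∈ periodicPts f := by
  obtain ⟨m, n, heq, hlt⟩ : ∃ m n, f^[m] x = f^[n] x ∧ m < n := by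
    obtain ⟨m, n, heq, hne⟩ : ∃ m n, f^[m] x = f^[n] x ∧ m ≠ n := by
      simpa [Injective] using not_injective_infinite_finite (f^[·] x)
    rcases lt_or_gt_of_ne hne with hlt | hlt
    exacts [⟨m, n, heq, hlt⟩, ⟨n, m, heq.symm, hlt⟩]
  refine ⟨m, mk_mem_periodicPts (Nat.sub_pos_of_lt hlt) ?_⟩
  rw [IsPeriodicPt, IsFixedPt, ← iterate_add_apply, Nat.sub_add_cancel hlt.le, heq]

theorem exists_perm_eqOn_periodicPts (f : α → α) :
    ∃ τ : Perm α, (∀ x ∈ periodicPts f, τ x = f x) ∧ ∀ x ∉ periodicPts f, τ x = x := by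
  classical
  exact ⟨Perm.ofSubtype ((bijOn_periodicPts f).equiv f),
    fun x hx => Perm.ofSubtype_apply_of_mem _ hx,
    fun x hx => Perm.ofSubtype_apply_of_not_mem _ hx⟩

end Function

namespace Relation

variable {α : Type*} {r : α → α → Prop}

theorem TransGen.exists_rel_transGen_self {a : α} (h : TransGen r a a) :
    ∃ b, r a b ∧ TransGen r b b := by
  obtain ⟨b, hab, hba⟩ := TransGen.head'_iff.1 h
  exact ⟨b, hab, TransGen.tail' hba hab⟩

theorem TransGen.exists_perm [Finite α] {a : α} (h : TransGen r a a) :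
    ∃ τ : Perm α, (∀ x, τ x = x ∨ r x (τ x)) ∧ ∃ x, r x (τ x) := by
  classical
  have hsucc : ∀ x, ∃ y, (y = x ∨ r x y) ∧ (TransGen r x x → r x y ∧ TransGen r y y) := by
    intro x
    by_cases hx : TransGen r x x
    · obtain ⟨y, hxy, hy⟩ := hx.exists_rel_transGen_self
      exact ⟨y, Or.inr hxy, fun _ => ⟨hxy, hy⟩⟩
    · exact ⟨x, Or.inl rfl, fun h => absurd h hx⟩
  -- A periodic orbit of a successor map that stays on closed walks is a simple `r`-cycle.
  choose f hf_step hf_cycle using hsucc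
  have hcycle : ∀ m, TransGen r (f^[m] a) (f^[m] a) := by
    intro m
    induction m with
    | zero => exact h
    | succ m ih => rw [iterate_succ_apply']; exact (hf_cycle _ ih).2
  obtain ⟨m, hm⟩ := exists_iterate_mem_periodicPts f a
  obtain ⟨τ, hτ_mem, hτ_not_mem⟩ := exists_perm_eqOn_periodicPts f
  refine ⟨τ, fun x => ?_, f^[m] a, hτ_mem _ hm ▸ (hf_cycle _ (hcycle m)).1⟩
  by_cases hx : x ∈ periodicPts f
  · exact hτ_mem x hx ▸ hf_step x
  · exact Or.inl (hτ_not_mem x hx)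

end Relation

section EnvyCycleElimination

variable {ι γ : Type*} (v : ι → Finset γ → ℝ) (B : ι → Finset γ)

def IsEF1 [DecidableEq γ] : Prop :=
  ∀ i j, i ≠ j → B j = ∅ ∨ ∃ g ∈ B j, v i ((B j).erase g) ≤ v i (B i)

def Envies (i j : ι) : Prop :=
  v i (B i) < v i (B j)

variable {v B}

theorem IsEF1.comp_perm [DecidableEq γ] (hv : ∀ i, Monotone (v i)) (hB : IsEF1 v B) {σ : Perm ι}
    (hσ : ∀ i, v i (B i) ≤ v i (B (σ i))) : IsEF1 v (fun i => B (σ i)) := by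
  intro i j hij
  by_cases hji : σ j = i
  · subst hji
    rcases (B (σ j)).eq_empty_or_nonempty with hempty | ⟨g, hg⟩
    · exact Or.inl hempty
    · exact Or.inr ⟨g, hg, (hv _ (Finset.erase_subset g _)).trans (hσ _)⟩
  · rcases hB i (σ j) (Ne.symm hji) with hempty | ⟨g, hg, hle⟩
    · exact Or.inl hempty
    · exact Or.inr ⟨g, hg, hle.trans (hσ i)⟩

theorem exists_perm_improving_of_envy_cycle [Finite ι] {i : ι} (h : TransGen (Envies v B) i i) :
    ∃ τ : Perm ι, (∀ j, v j (B j) ≤ v j (B (τ j))) ∧ ∃ j, v j (B j) < v j (B (τ j)) := by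
  obtain ⟨τ, hτ, j, hj⟩ := h.exists_perm
  refine ⟨τ, fun k => ?_, j, hj⟩
  rcases hτ k with hfix | henvy
  · rw [hfix]
  · exact henvy.le

variable (v B)

theorem exists_perm_improving_envy_acyclic [Fintype ι] :
    ∃ σ : Perm ι, (∀ i, v i (B i) ≤ v i (B (σ i))) ∧
      ∀ i, ¬TransGen (Envies v (fun i => B (σ i))) i i := by
  classical
  let welfare (σ : Perm ι) : ℝ := ∑ i, v i (B (σ i))
  obtain ⟨σ, hσ_mem, hσ_max⟩ := Finset.exists_max_image
    (Finset.univ.filter fun σ : Perm ι => ∀ i, v i (B i) ≤ v i (B (σ i))) welfare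
    ⟨1, by simp⟩
  have hσ : ∀ i, v i (B i) ≤ v i (B (σ i)) := (Finset.mem_filter.1 hσ_mem).2
  refine ⟨σ, hσ, fun i hcycle => ?_⟩
  obtain ⟨τ, hτ, j, hj⟩ := exists_perm_improving_of_envy_cycle hcycle
  have hστ : welfare (σ * τ) ≤ welfare σ :=
    hσ_max (σ * τ) (Finset.mem_filter.2 ⟨Finset.mem_univ _, fun k => (hσ k).trans (hτ k)⟩)
  exact not_lt_of_ge hστ (Finset.sum_lt_sum (fun k _ => hτ k) ⟨j, Finset.mem_univ j, hj⟩)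

end EnvyCycleElimination

/-- envy-cycle elimination: any EF1 allocation for additive
valuations can be rearranged by a permutation of the bundles so that it
remains EF1 and the envy graph is acyclic. -/
theorem stmt_18 {γ : Type*} [DecidableEq γ] (n : ℕ)
    (w : Fin n → γ → ℝ) (hw : ∀ i g, 0 ≤ w i g)
    (A : Fin n → Finset γ)
    (hEF1 : ∀ i j : Fin n, i ≠ j → A j = ∅ ∨
      ∃ g ∈ A j, ∑ x ∈ (A j).erase g, w i x ≤ ∑ x ∈ A i, w i x) :
    ∃ σ : Equiv.Perm (Fin n),
      (∀ i j : Fin n, i ≠ j → A (σ j) = ∅ ∨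
        ∃ g ∈ A (σ j), ∑ x ∈ (A (σ j)).erase g, w i x ≤ ∑ x ∈ A (σ i), w i x)
      ∧ Irreflexive (Relation.TransGen
          (fun i j : Fin n =>
            ∑ x ∈ A (σ i), w i x < ∑ x ∈ A (σ j), w i x)) := by
  let v (i : Fin n) (S : Finset γ) : ℝ := ∑ x ∈ S, w i x
  have hv : ∀ i, Monotone (v i) := fun i _ _ hST =>
    Finset.sum_le_sum_of_subset_of_nonneg hST fun x _ _ => hw i x
  obtain ⟨σ, hσ, hacyclic⟩ := exists_perm_improving_envy_acyclic v A
  exact ⟨σ, IsEF1.comp_perm (v := v) hv hEF1 hσ, hacyclic⟩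
end
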